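/- In the partial observation model, for an arbitrary but fixed control strategy g, the posterior beliefs of all subsystems are conditionally independent given the history of shared states and control actions: for every t = 1,…,T, every realization (z_{1:t}, u_{1:t}) with P(Z_{1:t}=z_{1:t}, U_{1:t}=u_{1:t}) > 0, and all measurable subsets E^i_s ⊆ Δ(𝒳^i) (i = 1,…,n, s = 1,…,t), one has P(Ξ_{1:t} ∈ E_{1:t} | Z_{1:t}=z_{1:t}, U_{1:t}=u_{1:t}) = ∏_{i=1}^n P(Ξ^i_{1:t} ∈ E^i_{1:t} | Z_{1:t}=z_{1:t}, U_{1:t}=u_{1:t}), where Ξ_{1:t} ∈ E_{1:t} abbreviates (Ξ^i_s ∈ E^i_s for all i, s). -/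

import Mathlib

open scoped Classical

namespace ControlSharing

variable {n T : ℕ}
variable {Z : Type} [Fintype Z] [Nonempty Z]
variable {X : Fin n → Type} [∀ i, Fintype (X i)] [∀ i, Nonempty (X i)]
variable {Y : Fin n → Type} [∀ i, Fintype (Y i)] [∀ i, Nonempty (Y i)]
variable {U : Fin n → Type} [∀ i, Fintype (U i)] [∀ i, Nonempty (U i)]
variable {W0 : Type} [Fintype W0] [Nonempty W0]
variable {W : Fin n → Type} [∀ i, Fintype (W i)] [∀ i, Nonempty (W i)]
variable {WT : Fin n → Type} [∀ i, Fintype (WT i)] [∀ i, Nonempty (WT i)]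

/-- A probability weight function on a finite type. -/
def IsLaw {α : Type} [Fintype α] (P : α → ℝ) : Prop :=
  (∀ a, 0 ≤ P a) ∧ ∑ a, P a = 1

/-- Sample space of primitive random variables for the partial observation model: the initial
shared state `Z₁`, the initial local states `X₁ⁱ`, the shared-dynamics noises `W⁰_t`, the local
plant noises `Wⁱ_t` and the observation noises `W̃ⁱ_t`. -/
abbrev OmegaP (T : ℕ) (Z : Type) (X : Fin n → Type) (W0 : Type) (W WT : Fin n → Type) : Type :=
  Z × (∀ i, X i) × (Fin T → W0) × (∀ i, Fin T → W i) × (∀ i, Fin T → WT i)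

/-- The probability weight of a sample point: `Z₁ ~ P_Z`; conditionally on `Z₁` the initial
local states are independent with `X₁ⁱ ~ P_{Xⁱ|Z}(·|Z₁)`; all plant and observation noises are
independent with laws `P_{W⁰}`, `P_{Wⁱ}`, `P_{W̃ⁱ}`, independent of the initial states. -/
noncomputable def weightP (PZ : Z → ℝ) (PX : ∀ i, Z → X i → ℝ) (PW0 : W0 → ℝ)
    (PW : ∀ i, W i → ℝ) (PWT : ∀ i, WT i → ℝ) (ω : OmegaP T Z X W0 W WT) : ℝ :=
  PZ ω.1 * (∏ i, PX i ω.1 (ω.2.1 i)) * (∏ t, PW0 (ω.2.2.1 t)) *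
    (∏ i, ∏ t, PW i (ω.2.2.2.1 i t)) * (∏ i, ∏ t, PWT i (ω.2.2.2.2 i t))

/-- A control strategy for the partial observation model: station `i` chooses
`Uⁱ_t = gⁱ_t(Z_{1:t}, Yⁱ_{1:t}, U_{1:t-1})`. -/
def StrategyP (Z : Type) (Y U : Fin n → Type) : Type :=
  ∀ (i : Fin n) (t : ℕ), (Fin (t + 1) → Z) → (Fin (t + 1) → Y i) →
    (Fin t → ∀ j, U j) → U i

variable (f0 : ℕ → Z → (∀ j, U j) → W0 → Z)
variable (f : ∀ i, ℕ → Z → X i → (∀ j, U j) → W i → X i)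
variable (ℓ : ∀ i, ℕ → X i → WT i → Y i)

/-- The closed-loop trajectory of the partial observation model: histories
`(Z_{1:t+1}, X_{1:t+1}, Y_{1:t+1}, U_{1:t+1})` generated by
`Z_{t+1} = f⁰_t(Z_t, U_t, W⁰_t)`, `Xⁱ_{t+1} = fⁱ_t(Z_t, Xⁱ_t, U_t, Wⁱ_t)`,
`Yⁱ_t = ℓⁱ_t(Xⁱ_t, W̃ⁱ_t)` and the strategy `g`. -/
noncomputable def trajP (g : StrategyP Z Y U) (ω : OmegaP T Z X W0 W WT) :
    (t : ℕ) → (Fin (t + 1) → Z) × (∀ i, Fin (t + 1) → X i) ×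
      (∀ i, Fin (t + 1) → Y i) × (Fin (t + 1) → ∀ j, U j)
  | 0 =>
    let zh : Fin 1 → Z := fun _ => ω.1
    let xh : ∀ i, Fin 1 → X i := fun i _ => ω.2.1 i
    let yh : ∀ i, Fin 1 → Y i := fun i _ =>
      ℓ i 0 (ω.2.1 i)
        (if h : 0 < T then ω.2.2.2.2 i ⟨0, h⟩ else Classical.arbitrary (WT i))
    ⟨zh, xh, yh, fun _ j => g j 0 zh (yh j) (fun s => s.elim0)⟩
  | t + 1 =>
    let prev := trajP g ω t
    let ucur := prev.2.2.2 (Fin.last t)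
    let znew := f0 t (prev.1 (Fin.last t)) ucur
      (if h : t < T then ω.2.2.1 ⟨t, h⟩ else Classical.arbitrary W0)
    let xnew : ∀ i, X i := fun i =>
      f i t (prev.1 (Fin.last t)) (prev.2.1 i (Fin.last t)) ucur
        (if h : t < T then ω.2.2.2.1 i ⟨t, h⟩ else Classical.arbitrary (W i))
    let ynew : ∀ i, Y i := fun i =>
      ℓ i (t + 1) (xnew i)
        (if h : t + 1 < T then ω.2.2.2.2 i ⟨t + 1, h⟩ else Classical.arbitrary (WT i))
    let zh : Fin (t + 2) → Z := Fin.snoc prev.1 znew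
    let xh : ∀ i, Fin (t + 2) → X i := fun i => Fin.snoc (prev.2.1 i) (xnew i)
    let yh : ∀ i, Fin (t + 2) → Y i := fun i => Fin.snoc (prev.2.2.1 i) (ynew i)
    ⟨zh, xh, yh, Fin.snoc prev.2.2.2 (fun j => g j (t + 1) zh (yh j) prev.2.2.2)⟩

/-- The shared state process `Z_t`. -/
noncomputable def ZpP (g : StrategyP Z Y U) (t : ℕ) (ω : OmegaP T Z X W0 W WT) : Z :=
  (trajP f0 f ℓ g ω t).1 (Fin.last t)

/-- The local state process `Xⁱ_t`. -/
noncomputable def XpP (g : StrategyP Z Y U) (i : Fin n) (t : ℕ) (ω : OmegaP T Z X W0 W WT) :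
    X i :=
  (trajP f0 f ℓ g ω t).2.1 i (Fin.last t)

/-- The observation process `Yⁱ_t`. -/
noncomputable def YpP (g : StrategyP Z Y U) (i : Fin n) (t : ℕ) (ω : OmegaP T Z X W0 W WT) :
    Y i :=
  (trajP f0 f ℓ g ω t).2.2.1 i (Fin.last t)

/-- The action process `Uⁱ_t`. -/
noncomputable def UpP (g : StrategyP Z Y U) (i : Fin n) (t : ℕ) (ω : OmegaP T Z X W0 W WT) :
    U i :=
  (trajP f0 f ℓ g ω t).2.2.2 (Fin.last t) i

/-- Probability of an event under a weight function. -/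
noncomputable def Pr {Ω : Type} [Fintype Ω] (μ : Ω → ℝ) (A : Ω → Prop) : ℝ :=
  ∑ ω : Ω, if A ω then μ ω else 0

/-- Conditional probability `P(A | B)`. -/
noncomputable def CondPr {Ω : Type} [Fintype Ω] (μ : Ω → ℝ) (A B : Ω → Prop) : ℝ :=
  Pr μ (fun ω => A ω ∧ B ω) / Pr μ B

/-- Conditional expectation `E[h | B]`. -/
noncomputable def CondExp {Ω : Type} [Fintype Ω] (μ : Ω → ℝ) (h : Ω → ℝ) (B : Ω → Prop) : ℝ :=
  (∑ ω : Ω, if B ω then μ ω * h ω else 0) / Pr μ B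

/-- The expected total cost `J(g) = E[∑_{t=1}^T c_t(Z_t, X_t, U_t)]`. -/
noncomputable def JP (c : ℕ → Z → (∀ i, X i) → (∀ i, U i) → ℝ)
    (μ : OmegaP T Z X W0 W WT → ℝ) (g : StrategyP Z Y U) : ℝ :=
  ∑ ω : OmegaP T Z X W0 W WT, μ ω *
    ∑ t ∈ Finset.range T,
      c t (ZpP f0 f ℓ g t ω) (fun i => XpP f0 f ℓ g i t ω) (fun i => UpP f0 f ℓ g i t ω)

/-- The posterior belief `Ξⁱ_t` of control station `i` on its local state `Xⁱ_t` given all of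
its information `(Yⁱ_{1:t}, Z_{1:t}, U_{1:t-1})`, realized at the sample point `ω`. -/
noncomputable def XiBelief (μ : OmegaP T Z X W0 W WT → ℝ) (g : StrategyP Z Y U) (i : Fin n)
    (t : ℕ) (ω : OmegaP T Z X W0 W WT) : X i → ℝ := fun x =>
  CondPr μ (fun ω' => XpP f0 f ℓ g i t ω' = x)
    (fun ω' => (∀ s ≤ t, YpP f0 f ℓ g i s ω' = YpP f0 f ℓ g i s ω) ∧
      (∀ s ≤ t, ZpP f0 f ℓ g s ω' = ZpP f0 f ℓ g s ω) ∧
      (∀ s < t, ∀ j, UpP f0 f ℓ g j s ω' = UpP f0 f ℓ g j s ω))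


/-!
Fix the realized shared history `(z, u)`. On the event `Z_{1:t} = z_{1:t}, U_{1:t} = u_{1:t}` the
state, observations and actions of subsystem `i` follow a recursion driven only by its own
primitive variables `(Xⁱ₁, Wⁱ, W̃ⁱ)`, with `z` and `u` substituted for the shared quantities.
Hence the conditioning event is a product event (`Z₁ = z₁`, a constraint on `W⁰`, and one
constraint on the primitives of each subsystem), and on it every belief `Ξⁱ_s` is a function of
the primitives of subsystem `i` alone. Given `Z₁` the sample weight factorises over `W⁰` and the
primitives of the subsystems, so conditional probabilities of product events given product
events factor subsystem by subsystem.
-/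

set_option linter.unusedSectionVars false

theorem pr_congr {Ω : Type} [Fintype Ω] (μ : Ω → ℝ) {A A' : Ω → Prop} (h : ∀ ω, A ω ↔ A' ω) :
    Pr μ A = Pr μ A' := by
  rw [show A = A' from funext fun ω => propext (h ω)]

theorem condPr_congr {Ω : Type} [Fintype Ω] (μ : Ω → ℝ) {A A' B B' : Ω → Prop}
    (hB : ∀ ω, B ω ↔ B' ω) (hA : ∀ ω, B ω → (A ω ↔ A' ω)) :
    CondPr μ A B = CondPr μ A' B' := by
  unfold CondPr
  rw [pr_congr μ hB, pr_congr μ (A' := fun ω => A' ω ∧ B' ω) fun ω =>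
    (and_congr_left (hA ω)).trans (and_congr_right' (hB ω))]

section ProductEvents

abbrev LocalOmega (T : ℕ) (X W WT : Fin n → Type) (i : Fin n) : Type :=
  X i × (Fin T → W i) × (Fin T → WT i)

def localPart (ω : OmegaP T Z X W0 W WT) (i : Fin n) : LocalOmega T X W WT i :=
  (ω.2.1 i, ω.2.2.2.1 i, ω.2.2.2.2 i)

@[simps]
def equivSharedLocal : OmegaP T Z X W0 W WT ≃ Z × (Fin T → W0) × ∀ i, LocalOmega T X W WT i where
  toFun ω := (ω.1, ω.2.2.1, localPart ω)
  invFun v := (v.1, fun i => (v.2.2 i).1, v.2.1, fun i => (v.2.2 i).2.1, fun i => (v.2.2 i).2.2)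
  left_inv _ := rfl
  right_inv _ := rfl

def localWeight (PX : ∀ i, Z → X i → ℝ) (PW : ∀ i, W i → ℝ) (PWT : ∀ i, WT i → ℝ) (z0 : Z)
    (i : Fin n) (p : LocalOmega T X W WT i) : ℝ :=
  PX i z0 p.1 * (∏ r, PW i (p.2.1 r)) * ∏ r, PWT i (p.2.2 r)

def productEvent (z0 : Z) (Q0 : (Fin T → W0) → Prop) (K : ∀ i, LocalOmega T X W WT i → Prop)
    (ω : OmegaP T Z X W0 W WT) : Prop :=
  ω.1 = z0 ∧ Q0 ω.2.2.1 ∧ ∀ i, K i (localPart ω i)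

variable (PZ : Z → ℝ) (PX : ∀ i, Z → X i → ℝ) (PW0 : W0 → ℝ) (PW : ∀ i, W i → ℝ)
  (PWT : ∀ i, WT i → ℝ)

theorem weightP_eq_localWeight (ω : OmegaP T Z X W0 W WT) :
    weightP PZ PX PW0 PW PWT ω =
      PZ ω.1 * ((∏ r, PW0 (ω.2.2.1 r)) * ∏ i, localWeight PX PW PWT ω.1 i (localPart ω i)) := by
  simp only [weightP, localWeight, localPart, Finset.prod_mul_distrib]
  ring

theorem pr_productEvent (z0 : Z) (Q0 : (Fin T → W0) → Prop)
    (K : ∀ i, LocalOmega T X W WT i → Prop) :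
    Pr (weightP PZ PX PW0 PW PWT) (productEvent z0 Q0 K) =
      PZ z0 * (Pr (fun w0 => ∏ r, PW0 (w0 r)) Q0 * ∏ i, Pr (localWeight PX PW PWT z0 i) (K i)) := by
  unfold Pr
  rw [Fintype.sum_equiv equivSharedLocal _ fun v => (if v.1 = z0 then PZ z0 else 0) *
      ((if Q0 v.2.1 then ∏ r, PW0 (v.2.1 r) else 0) *
        ∏ i, if K i (v.2.2 i) then localWeight PX PW PWT z0 i (v.2.2 i) else 0)]
  · rw [Fintype.sum_prod_type, Fintype.sum_eq_single z0 fun a ha => by simp [ha]]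
    simp only [if_true, ← Finset.mul_sum]
    rw [Fintype.sum_prod_type]
    dsimp only
    rw [Fintype.prod_sum, Finset.sum_mul_sum]
  · intro ω
    simp only [productEvent, weightP_eq_localWeight, equivSharedLocal_apply, Fintype.prod_ite_zero,
      ite_zero_mul_ite_zero]
    split_ifs with h
    · rw [h.1]
    · rfl

variable {PZ PX PW0 PW PWT} {z0 : Z} {Q0 : (Fin T → W0) → Prop}
  {K : ∀ i, LocalOmega T X W WT i → Prop}

theorem condPr_productEvent_forall (hK : Pr (weightP PZ PX PW0 PW PWT) (productEvent z0 Q0 K) ≠ 0)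
    (L : ∀ i, LocalOmega T X W WT i → Prop) :
    CondPr (weightP PZ PX PW0 PW PWT) (fun ω => ∀ i, L i (localPart ω i)) (productEvent z0 Q0 K) =
      ∏ i, CondPr (localWeight PX PW PWT z0 i) (L i) (K i) := by
  have hLK : ∀ ω, ((∀ i, L i (localPart ω i)) ∧ productEvent z0 Q0 K ω) ↔
      productEvent z0 Q0 (fun i p => L i p ∧ K i p) ω := fun ω => by
    simp only [productEvent, forall_and]
    tauto
  rw [pr_productEvent] at hK
  unfold CondPr
  rw [pr_congr _ hLK, pr_productEvent, pr_productEvent,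
    mul_div_mul_left _ _ (left_ne_zero_of_mul hK),
    mul_div_mul_left _ _ (left_ne_zero_of_mul (right_ne_zero_of_mul hK)), Finset.prod_div_distrib]

theorem condPr_productEvent_local (hK : Pr (weightP PZ PX PW0 PW PWT) (productEvent z0 Q0 K) ≠ 0)
    (L : ∀ i, LocalOmega T X W WT i → Prop) (i : Fin n) :
    CondPr (weightP PZ PX PW0 PW PWT) (fun ω => L i (localPart ω i)) (productEvent z0 Q0 K) =
      CondPr (localWeight PX PW PWT z0 i) (L i) (K i) := by
  have hKj : ∀ j, Pr (localWeight PX PW PWT z0 j) (K j) ≠ 0 := by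
    rw [pr_productEvent] at hK
    exact fun j => Finset.prod_ne_zero_iff.mp (right_ne_zero_of_mul (right_ne_zero_of_mul hK)) j
      (Finset.mem_univ j)
  have hcond : ∀ j, j ≠ i →
      CondPr (localWeight PX PW PWT z0 j) (fun p => j = i → L j p) (K j) = 1 := fun j hj => by
    unfold CondPr
    rw [pr_congr _ fun p => show (j = i → L j p) ∧ K j p ↔ K j p by simp [hj]]
    exact div_self (hKj j)
  calc CondPr (weightP PZ PX PW0 PW PWT) (fun ω => L i (localPart ω i)) (productEvent z0 Q0 K)
      = CondPr (weightP PZ PX PW0 PW PWT) (fun ω => ∀ j, j = i → L j (localPart ω j))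
          (productEvent z0 Q0 K) :=
        condPr_congr _ (fun _ => Iff.rfl) fun _ _ => ⟨fun h j hj => hj ▸ h, fun h => h i rfl⟩
    _ = ∏ j, CondPr (localWeight PX PW PWT z0 j) (fun p => j = i → L j p) (K j) :=
        condPr_productEvent_forall hK fun j p => j = i → L j p
    _ = CondPr (localWeight PX PW PWT z0 i) (fun p => i = i → L i p) (K i) :=
        Fintype.prod_eq_single i hcond
    _ = CondPr (localWeight PX PW PWT z0 i) (L i) (K i) :=
        condPr_congr _ (fun _ => Iff.rfl) fun _ _ => imp_iff_right rfl

end ProductEvents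

section Trajectory

variable (g : StrategyP Z Y U)

/-- Past the horizon `T` the noise is `Classical.arbitrary`, as in `trajP`. -/
noncomputable def extendNoise {α : Type} [Nonempty α] (w : Fin T → α) (s : ℕ) : α :=
  if h : s < T then w ⟨s, h⟩ else Classical.arbitrary α

theorem ZpP_succ (ω : OmegaP T Z X W0 W WT) (s : ℕ) :
    ZpP f0 f ℓ g (s + 1) ω =
      f0 s (ZpP f0 f ℓ g s ω) (fun j => UpP f0 f ℓ g j s ω) (extendNoise ω.2.2.1 s) := by
  simp [ZpP, UpP, trajP, extendNoise]

theorem XpP_succ (i : Fin n) (ω : OmegaP T Z X W0 W WT) (s : ℕ) :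
    XpP f0 f ℓ g i (s + 1) ω =
      f i s (ZpP f0 f ℓ g s ω) (XpP f0 f ℓ g i s ω) (fun j => UpP f0 f ℓ g j s ω)
        (extendNoise (ω.2.2.2.1 i) s) := by
  simp [ZpP, XpP, UpP, trajP, extendNoise]

theorem YpP_eq (i : Fin n) (ω : OmegaP T Z X W0 W WT) (s : ℕ) :
    YpP f0 f ℓ g i s ω = ℓ i s (XpP f0 f ℓ g i s ω) (extendNoise (ω.2.2.2.2 i) s) := by
  cases s <;> simp [XpP, YpP, trajP, extendNoise]

theorem trajP_eq_history (ω : OmegaP T Z X W0 W WT) (s : ℕ) :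
    trajP f0 f ℓ g ω s =
      (fun r : Fin (s + 1) => ZpP f0 f ℓ g r ω, fun i (r : Fin (s + 1)) => XpP f0 f ℓ g i r ω,
        fun i (r : Fin (s + 1)) => YpP f0 f ℓ g i r ω,
        fun (r : Fin (s + 1)) j => UpP f0 f ℓ g j r ω) := by
  induction s with
  | zero =>
    have hr : ∀ r : Fin 1, r = Fin.last 0 := fun r => Subsingleton.elim _ _
    refine Prod.ext (funext fun r => ?_) (Prod.ext (funext fun i => funext fun r => ?_)
      (Prod.ext (funext fun i => funext fun r => ?_) (funext fun r => ?_))) <;> rw [hr r] <;> rfl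
  | succ s ih =>
    refine Prod.ext (funext fun r => ?_) (Prod.ext (funext fun i => funext fun r => ?_)
      (Prod.ext (funext fun i => funext fun r => ?_) (funext fun r => ?_))) <;>
    induction r using Fin.lastCases with
    | last => rfl
    | cast r => simp [trajP, ih]

theorem UpP_eq (j : Fin n) (ω : OmegaP T Z X W0 W WT) (s : ℕ) :
    UpP f0 f ℓ g j s ω =
      g j s (fun r : Fin (s + 1) => ZpP f0 f ℓ g r ω) (fun r => YpP f0 f ℓ g j r ω)
        (fun (r : Fin s) j' => UpP f0 f ℓ g j' r ω) := by
  have h : UpP f0 f ℓ g j s ω = g j s (trajP f0 f ℓ g ω s).1 ((trajP f0 f ℓ g ω s).2.2.1 j)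
      (fun r => (trajP f0 f ℓ g ω s).2.2.2 r.castSucc) := by
    cases s with
    | zero => exact congrArg _ (Subsingleton.elim (α := Fin 0 → ∀ j, U j) _ _)
    | succ s => simp [UpP, trajP]
  rw [h, trajP_eq_history]
  rfl

end Trajectory

section LocalDynamics

variable (g : StrategyP Z Y U) (z : ℕ → Z) (u : ℕ → ∀ j, U j)

noncomputable def localState (i : Fin n) (p : LocalOmega T X W WT i) : ℕ → X i
  | 0 => p.1
  | s + 1 => f i s (z s) (localState i p s) (u s) (extendNoise p.2.1 s)

noncomputable def localObs (i : Fin n) (p : LocalOmega T X W WT i) (s : ℕ) : Y i :=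
  ℓ i s (localState f z u i p s) (extendNoise p.2.2 s)

noncomputable def localAction (i : Fin n) (p : LocalOmega T X W WT i) (s : ℕ) : U i :=
  g i s (fun r : Fin (s + 1) => z r) (fun r => localObs f ℓ z u i p r) (fun r : Fin s => u r)

def AgreesBefore (s : ℕ) (ω : OmegaP T Z X W0 W WT) : Prop :=
  ∀ r < s, ZpP f0 f ℓ g r ω = z r ∧ ∀ j, UpP f0 f ℓ g j r ω = u r j

def SharedCompatible (t : ℕ) (w0 : Fin T → W0) : Prop :=
  ∀ s < t, f0 s (z s) (u s) (extendNoise w0 s) = z (s + 1)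

def LocalCompatible (t : ℕ) (i : Fin n) (p : LocalOmega T X W WT i) : Prop :=
  ∀ s ≤ t, localAction f ℓ g z u i p s = u s i

noncomputable def beliefGivenObs (μ : OmegaP T Z X W0 W WT → ℝ) (i : Fin n) (s : ℕ)
    (y : ℕ → Y i) : X i → ℝ := fun x =>
  CondPr μ (fun ω' => XpP f0 f ℓ g i s ω' = x)
    (fun ω' => (∀ r ≤ s, YpP f0 f ℓ g i r ω' = y r) ∧ (∀ r ≤ s, ZpP f0 f ℓ g r ω' = z r) ∧
      (∀ r < s, ∀ j, UpP f0 f ℓ g j r ω' = u r j))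

variable {f0 f ℓ g z u}

theorem AgreesBefore.mono {s s' : ℕ} {ω : OmegaP T Z X W0 W WT}
    (h : AgreesBefore f0 f ℓ g z u s ω) (hs : s' ≤ s) : AgreesBefore f0 f ℓ g z u s' ω :=
  fun r hr => h r (lt_of_lt_of_le hr hs)

theorem agreesBefore_of_history {t s : ℕ} {ω : OmegaP T Z X W0 W WT}
    (hz : ∀ s ≤ t, ZpP f0 f ℓ g s ω = z s) (hu : ∀ s ≤ t, ∀ j, UpP f0 f ℓ g j s ω = u s j)
    (hs : s ≤ t) : AgreesBefore f0 f ℓ g z u s ω :=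
  fun r hr => ⟨hz r (by omega), hu r (by omega)⟩

theorem XpP_eq_localState {s : ℕ} {ω : OmegaP T Z X W0 W WT}
    (h : AgreesBefore f0 f ℓ g z u s ω) (i : Fin n) :
    XpP f0 f ℓ g i s ω = localState f z u i (localPart ω i) s := by
  induction s with
  | zero => rfl
  | succ s ih =>
    obtain ⟨hz, hu⟩ := h s s.lt_succ_self
    rw [XpP_succ, ih (h.mono s.le_succ), hz, funext hu]
    rfl

theorem YpP_eq_localObs {s : ℕ} {ω : OmegaP T Z X W0 W WT}
    (h : AgreesBefore f0 f ℓ g z u s ω) (i : Fin n) :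
    YpP f0 f ℓ g i s ω = localObs f ℓ z u i (localPart ω i) s := by
  rw [YpP_eq, XpP_eq_localState h]
  rfl

theorem UpP_eq_localAction {s : ℕ} {ω : OmegaP T Z X W0 W WT}
    (h : AgreesBefore f0 f ℓ g z u s ω) (hs : ZpP f0 f ℓ g s ω = z s) (j : Fin n) :
    UpP f0 f ℓ g j s ω = localAction f ℓ g z u j (localPart ω j) s := by
  rw [UpP_eq]
  unfold localAction
  congr 1
  · funext r
    rcases (Nat.lt_succ_iff.mp r.isLt).lt_or_eq with hr | hr
    · exact (h r hr).1
    · rw [hr]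
      exact hs
  · funext r
    exact YpP_eq_localObs (h.mono (Nat.lt_succ_iff.mp r.isLt)) j
  · funext r j'
    exact (h r r.isLt).2 j'

theorem history_eq_iff_productEvent (t : ℕ) (ω : OmegaP T Z X W0 W WT) :
    ((∀ s ≤ t, ZpP f0 f ℓ g s ω = z s) ∧ (∀ s ≤ t, ∀ j, UpP f0 f ℓ g j s ω = u s j)) ↔
      productEvent (z 0) (SharedCompatible f0 z u t) (LocalCompatible f ℓ g z u t) ω := by
  constructor
  · rintro ⟨hz, hu⟩
    refine ⟨hz 0 t.zero_le, fun s hs => ?_, fun i s hs => ?_⟩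
    · rw [← hz (s + 1) hs, ZpP_succ, hz s hs.le, funext (hu s hs.le)]
    · rw [← hu s hs i, UpP_eq_localAction (agreesBefore_of_history hz hu hs) (hz s hs)]
  · rintro ⟨h0, hshared, hlocal⟩
    suffices h : ∀ s ≤ t, ZpP f0 f ℓ g s ω = z s ∧ ∀ j, UpP f0 f ℓ g j s ω = u s j from
      ⟨fun s hs => (h s hs).1, fun s hs => (h s hs).2⟩
    intro s
    induction s using Nat.strong_induction_on with
    | _ s ih =>
      intro hs
      have before : AgreesBefore f0 f ℓ g z u s ω := fun r hr => ih r hr (by omega)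
      have hzs : ZpP f0 f ℓ g s ω = z s := by
        cases s with
        | zero => exact h0
        | succ s =>
          obtain ⟨hz, hu⟩ := before s s.lt_succ_self
          rw [ZpP_succ, hz, funext hu]
          exact hshared s hs
      exact ⟨hzs, fun j => (UpP_eq_localAction before hzs j).trans (hlocal j s hs)⟩

theorem XiBelief_eq_beliefGivenObs (μ : OmegaP T Z X W0 W WT → ℝ) {s : ℕ}
    {ω : OmegaP T Z X W0 W WT} (h : AgreesBefore f0 f ℓ g z u s ω)
    (hs : ZpP f0 f ℓ g s ω = z s) (i : Fin n) :
    XiBelief f0 f ℓ μ g i s ω =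
      beliefGivenObs f0 f ℓ g z u μ i s (localObs f ℓ z u i (localPart ω i)) := by
  have hy : ∀ r ≤ s, YpP f0 f ℓ g i r ω = localObs f ℓ z u i (localPart ω i) r :=
    fun r hr => YpP_eq_localObs (h.mono hr) i
  have hz : ∀ r ≤ s, ZpP f0 f ℓ g r ω = z r := fun r hr => by
    rcases hr.lt_or_eq with hr | rfl
    exacts [(h r hr).1, hs]
  funext x
  refine condPr_congr μ (fun ω' => and_congr (forall₂_congr fun r hr => by rw [hy r hr])
    (and_congr (forall₂_congr fun r hr => by rw [hz r hr])
      (forall₂_congr fun r hr => by simp only [(h r hr).2]))) fun _ _ => Iff.rfl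

end LocalDynamics

theorem partial_obs_belief_conditional_independence
    (PZ : Z → ℝ) (PX : ∀ i, Z → X i → ℝ) (PW0 : W0 → ℝ)
    (PW : ∀ i, W i → ℝ) (PWT : ∀ i, WT i → ℝ)
    (g : StrategyP Z Y U)
    (t : ℕ) (z : ℕ → Z) (u : ℕ → ∀ j, U j)
    (E : ∀ i : Fin n, ℕ → Set (X i → ℝ))
    (hpos : 0 < Pr (weightP (T := T) PZ PX PW0 PW PWT)
      (fun ω => (∀ s ≤ t, ZpP f0 f ℓ g s ω = z s) ∧
        (∀ s ≤ t, ∀ j, UpP f0 f ℓ g j s ω = u s j))) :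
    CondPr (weightP (T := T) PZ PX PW0 PW PWT)
        (fun ω => ∀ i, ∀ s ≤ t,
          XiBelief f0 f ℓ (weightP PZ PX PW0 PW PWT) g i s ω ∈ E i s)
        (fun ω => (∀ s ≤ t, ZpP f0 f ℓ g s ω = z s) ∧
          (∀ s ≤ t, ∀ j, UpP f0 f ℓ g j s ω = u s j)) =
      ∏ i, CondPr (weightP (T := T) PZ PX PW0 PW PWT)
        (fun ω => ∀ s ≤ t,
          XiBelief f0 f ℓ (weightP PZ PX PW0 PW PWT) g i s ω ∈ E i s)
        (fun ω => (∀ s ≤ t, ZpP f0 f ℓ g s ω = z s) ∧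
          (∀ s ≤ t, ∀ j, UpP f0 f ℓ g j s ω = u s j)) := by
  set μ := weightP (T := T) PZ PX PW0 PW PWT
  have hB (ω : OmegaP T Z X W0 W WT) :=
    history_eq_iff_productEvent (f0 := f0) (f := f) (ℓ := ℓ) (g := g) (z := z) (u := u) t ω
  obtain ⟨L, hA⟩ : ∃ L : ∀ i, LocalOmega T X W WT i → Prop, ∀ ω,
      ((∀ s ≤ t, ZpP f0 f ℓ g s ω = z s) ∧ (∀ s ≤ t, ∀ j, UpP f0 f ℓ g j s ω = u s j)) →
      ∀ i, (∀ s ≤ t, XiBelief f0 f ℓ μ g i s ω ∈ E i s) ↔ L i (localPart ω i) :=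
    ⟨fun i p => ∀ s ≤ t, beliefGivenObs f0 f ℓ g z u μ i s (localObs f ℓ z u i p) ∈ E i s,
      fun ω ⟨hz, hu⟩ i => forall₂_congr fun s hs => by
        rw [XiBelief_eq_beliefGivenObs μ (agreesBefore_of_history hz hu hs) (hz s hs)]⟩
  have hK :
      Pr μ (productEvent (z 0) (SharedCompatible f0 z u t) (LocalCompatible f ℓ g z u t)) ≠ 0 :=
    pr_congr μ hB ▸ hpos.ne'
  rw [condPr_congr μ hB fun ω hω => forall_congr' (hA ω hω), condPr_productEvent_forall hK]
  refine Finset.prod_congr rfl fun i _ => ?_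
  rw [condPr_congr μ hB (hA · · i), condPr_productEvent_local hK]

end ControlSharing
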